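/- For every N ≥ 2 there exists M with M not ≡ 0 mod (N+1), a connected graph G and a vertex u of G such that, for L = {1,...,N} ∪ {M}, the Grundy values of CSG(L) on G and on the graph obtained from G by appending a path of N+1 vertices to u differ. Concretely, taking G to be the star with N+2 leaves, u its center, and M = 2N+4, the disjoint sum of G and G with a path of N+1 vertices appended to u is a first-player win. -/
import Mathlib


open SimpleGraph

/-- The minimum excludant of a set of naturals. -/
noncomputable def mex (s : Set ℕ) : ℕ := sInf {n | n ∉ s}

/-- The graph induced on a set of vertices is connected. -/
def ConnOn {V : Type*} (G : SimpleGraph V) (s : Set V) : Prop := (G.induce s).Connected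

/-- A legal move in the connected subtraction game CSG(L) on the graph `G`:
from remaining vertex set `s`, remove the (nonempty) connected set `s \ t` whose
cardinality lies in `L`, leaving `t`, which must be empty or induce a connected graph. -/
def CsgMove {V : Type*} [DecidableEq V] (G : SimpleGraph V) (L : Set ℕ)
    (s t : Finset V) : Prop :=
  t ⊆ s ∧ (s \ t).Nonempty ∧ (s \ t).card ∈ L ∧
    ConnOn G (↑(s \ t) : Set V) ∧ (t = ∅ ∨ ConnOn G (↑t : Set V))

/-- The Grundy value of the position with remaining vertex set `s` in the game
CSG(L) played on `G`, defined by the mex recursion over all legal moves. -/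
noncomputable def csgGrundy {V : Type*} [DecidableEq V] (G : SimpleGraph V) (L : Set ℕ)
    (s : Finset V) : ℕ :=
  mex (Set.range fun t : {t : Finset V // CsgMove G L s t} =>
    have : t.1.card < s.card := by
      obtain ⟨x, hx⟩ := t.2.2.1
      rw [Finset.mem_sdiff] at hx
      exact Finset.card_lt_card ((Finset.ssubset_iff_of_subset t.2.1).2 ⟨x, hx.1, hx.2⟩)
    csgGrundy G L t.1)
termination_by s.card
decreasing_by exact this

/-- The subdivided star with `t` branches of lengths `l 0, …, l (t-1)` appended
to a central vertex `none`. -/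
def subdividedStar {t : ℕ} (l : Fin t → ℕ) :
    SimpleGraph (Option (Σ i : Fin t, Fin (l i))) :=
  SimpleGraph.fromRel fun a b =>
    match a, b with
    | none, some ⟨_, j⟩ => (j : ℕ) = 0
    | some ⟨i, j⟩, some ⟨i', j'⟩ => (i : ℕ) = (i' : ℕ) ∧ (j : ℕ) + 1 = (j' : ℕ)
    | _, _ => False

/-- The graph `G` with a path on `k` new vertices appended at the vertex `u`. -/
def appendPath {V : Type*} (G : SimpleGraph V) (u : V) (k : ℕ) :
    SimpleGraph (V ⊕ Fin k) :=
  SimpleGraph.fromRel fun a b =>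
    match a, b with
    | Sum.inl x, Sum.inl y => G.Adj x y
    | Sum.inl x, Sum.inr j => x = u ∧ (j : ℕ) = 0
    | Sum.inr j, Sum.inr j' => (j : ℕ) + 1 = (j' : ℕ)
    | _, _ => False

lemma mex_eq_zero {s : Set ℕ} (h : 0 ∉ s) : mex s = 0 :=
  Nat.sInf_eq_zero.2 (Or.inl h)

lemma mex_ne_zero {s : Set ℕ} (h0 : 0 ∈ s) (hf : s.Finite) : mex s ≠ 0 := by
  intro h
  have hne : {n | n ∉ s}.Nonempty := (hf.infinite_compl).nonempty
  have := Nat.sInf_mem hne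
  rw [show sInf {n | n ∉ s} = mex s from rfl, h] at this
  exact this h0

lemma csgGrundy_def {V : Type*} [DecidableEq V] (G : SimpleGraph V) (L : Set ℕ) (s : Finset V) :
    csgGrundy G L s =
      mex (Set.range fun t : {t : Finset V // CsgMove G L s t} => csgGrundy G L t.1) := by
  rw [csgGrundy]

section GrundyBasics
variable {V : Type*} [DecidableEq V] [Fintype V] {G : SimpleGraph V} {L : Set ℕ}

lemma csgGrundy_ne_zero {s t : Finset V} (h : CsgMove G L s t) (ht : csgGrundy G L t = 0) :
    csgGrundy G L s ≠ 0 := by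
  rw [csgGrundy_def]
  exact mex_ne_zero ⟨⟨t, h⟩, ht⟩ (Set.finite_range _)

lemma csgGrundy_eq_zero {s : Finset V} (h : ∀ t, CsgMove G L s t → csgGrundy G L t ≠ 0) :
    csgGrundy G L s = 0 := by
  rw [csgGrundy_def]
  refine mex_eq_zero ?_
  rintro ⟨⟨t, ht⟩, h0⟩
  exact h t ht h0

lemma csgGrundy_empty : csgGrundy G L (∅ : Finset V) = 0 := by
  refine csgGrundy_eq_zero fun t ht => ?_
  have ht0 : t = ∅ := Finset.subset_empty.1 ht.1
  exact absurd ht.2.1 (by simp [ht0])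

lemma csgGrundy_removeAll {s : Finset V} (hne : s.Nonempty) (hcard : s.card ∈ L)
    (hconn : ConnOn G (↑s : Set V)) : csgGrundy G L s ≠ 0 := by
  refine csgGrundy_ne_zero (t := ∅) ⟨Finset.empty_subset s, ?_, ?_, ?_, Or.inl rfl⟩ csgGrundy_empty
  · simpa using hne
  · simpa using hcard
  · simpa using hconn

end GrundyBasics

section Conn
variable {V : Type*} {G : SimpleGraph V}

lemma connOn_singleton (v : V) : ConnOn G {v} := by
  haveI : Nonempty ({v} : Set V) := ⟨⟨v, rfl⟩⟩
  refine ⟨fun x y => ?_⟩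
  have : x = y := Subtype.ext (x.2.trans y.2.symm)
  rw [this]

lemma connOn_of_hub {s : Set V} {c : V} (hc : c ∈ s)
    (h : ∀ v ∈ s, v ≠ c → G.Adj c v) : ConnOn G s := by
  haveI : Nonempty s := ⟨⟨c, hc⟩⟩
  refine ⟨fun x y => ?_⟩
  have key : ∀ z : s, (G.induce s).Reachable z ⟨c, hc⟩ := by
    rintro ⟨z, hz⟩
    by_cases hzc : z = c
    · subst hzc; rfl
    · exact (Adj.symm (by simpa using h z hz hzc : (G.induce s).Adj ⟨c, hc⟩ ⟨z, hz⟩)).reachable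
  exact (key x).trans (key y).symm

lemma eq_of_no_edges {H : SimpleGraph V} (h : ∀ a b, ¬ H.Adj a b) {x y : V}
    (hr : H.Reachable x y) : x = y := by
  obtain ⟨w⟩ := hr
  cases w with
  | nil => rfl
  | cons ha _ => exact absurd ha (h _ _)

end Conn

namespace Star15
variable (N : ℕ)

abbrev SV := Option (Σ i : Fin (N + 2), Fin 1)
abbrev Gr : SimpleGraph (SV N) := subdividedStar fun _ : Fin (N + 2) => 1
abbrev LL : Set ℕ := Set.Icc 1 N ∪ {2 * N + 4}

lemma star_adj_center (x : Σ i : Fin (N + 2), Fin 1) : (Gr N).Adj none (some x) := by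
  obtain ⟨i, j⟩ := x
  have hj : (j : ℕ) = 0 := by have := j.2; omega
  exact (SimpleGraph.fromRel_adj _ _ _).2 ⟨by simp, Or.inl hj⟩

lemma star_not_adj (x y : Σ i : Fin (N + 2), Fin 1) : ¬ (Gr N).Adj (some x) (some y) := by
  obtain ⟨i, j⟩ := x; obtain ⟨i', j'⟩ := y
  intro hadj
  obtain ⟨hne, h | h⟩ := (SimpleGraph.fromRel_adj _ _ _).1 hadj
  · exact absurd h.2 (by have := j'.2; omega)
  · exact absurd h.2 (by have := j.2; omega)

lemma card_le_one (s : Finset (SV N)) (h0 : none ∉ s) (hc : ConnOn (Gr N) (↑s : Set (SV N))) :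
    s.card ≤ 1 := by
  by_contra h
  obtain ⟨a, ha, b, hb, hab⟩ := Finset.one_lt_card.mp (not_le.1 h)
  have key : (⟨a, by simpa using ha⟩ : (↑s : Set (SV N))) = ⟨b, by simpa using hb⟩ := by
    refine eq_of_no_edges ?_ (hc.preconnected _ _)
    rintro ⟨u, hu⟩ ⟨v, hv⟩ huv
    have hadj : (Gr N).Adj u v := huv
    match u, v with
    | none, _ => exact h0 (by simpa using hu)
    | some x, none => exact h0 (by simpa using hv)
    | some x, some y => exact star_not_adj N x y hadj
  exact hab (by simpa using congrArg Subtype.val key)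

lemma grundy_A (hN : 2 ≤ N) (s : Finset (SV N)) (hs : s.card = N + 1) :
    csgGrundy (Gr N) (LL N) s = 0 := by
  refine csgGrundy_eq_zero fun t ht => ?_
  obtain ⟨hsub, hne, hcL, hcR, hconn⟩ := ht
  have hk : (s \ t).card = s.card - t.card := Finset.card_sdiff_of_subset hsub
  have htle : t.card ≤ s.card := Finset.card_le_card hsub
  have hkN : 1 ≤ (s \ t).card ∧ (s \ t).card ≤ N := by
    rcases hcL with h | h
    · exact ⟨h.1, h.2⟩
    · exact absurd (Set.mem_singleton_iff.1 h) (by omega)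
  have htpos : 1 ≤ t.card := by omega
  have htN : t.card ≤ N := by omega
  have htne : t.Nonempty := Finset.card_pos.1 htpos
  rcases hconn with h | h
  · rw [h] at htpos; simp at htpos
  · exact csgGrundy_removeAll htne (Or.inl ⟨htpos, htN⟩) h

lemma grundy_B (hN : 2 ≤ N) (s : Finset (SV N)) (hs : s.card = N + 2) (h0 : none ∈ s) :
    csgGrundy (Gr N) (LL N) s ≠ 0 := by
  have hern : (s.erase none).Nonempty := by
    rw [← Finset.card_pos, Finset.card_erase_of_mem h0]; omega
  obtain ⟨l, hl⟩ := hern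
  obtain ⟨hlne, hls⟩ := Finset.mem_erase.1 hl
  refine csgGrundy_ne_zero (t := s.erase l)
    ⟨Finset.erase_subset _ _, ?_, ?_, ?_, Or.inr ?_⟩ ?_
  · rw [Finset.sdiff_erase_self hls]; exact ⟨l, Finset.mem_singleton_self l⟩
  · rw [Finset.sdiff_erase_self hls, Finset.card_singleton]
    exact Or.inl ⟨le_refl 1, by omega⟩
  · rw [Finset.sdiff_erase_self hls, Finset.coe_singleton]; exact connOn_singleton l
  · refine connOn_of_hub (c := (none : SV N))
      (by simp only [Finset.coe_erase, Set.mem_diff, Finset.mem_coe]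
          exact ⟨h0, by simpa using fun h => hlne h.symm⟩) ?_
    intro v hv hvne
    match v with
    | none => exact absurd rfl hvne
    | some x => exact star_adj_center N x
  · exact grundy_A N hN _ (by rw [Finset.card_erase_of_mem hls]; omega)

lemma card_SV : Fintype.card (SV N) = N + 3 := by
  simp [Fintype.card_option]

lemma grundy_star (hN : 2 ≤ N) :
    csgGrundy (Gr N) (LL N) (Finset.univ : Finset (SV N)) = 0 := by
  refine csgGrundy_eq_zero fun t ht => ?_
  obtain ⟨hsub, hne, hcL, hcR, hconn⟩ := ht
  have hcu : (Finset.univ : Finset (SV N)).card = N + 3 := by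
    rw [Finset.card_univ]; exact card_SV N
  have hk : (Finset.univ \ t).card = (N + 3) - t.card := by
    rw [Finset.card_sdiff_of_subset hsub, hcu]
  have htle : t.card ≤ N + 3 := by rw [← hcu]; exact Finset.card_le_card hsub
  have hkN : 1 ≤ (Finset.univ \ t).card ∧ (Finset.univ \ t).card ≤ N := by
    rcases hcL with h | h
    · exact ⟨h.1, h.2⟩
    · exact absurd (Set.mem_singleton_iff.1 h) (by omega)
  have htpos : 3 ≤ t.card := by omega
  have htconn : ConnOn (Gr N) (↑t : Set (SV N)) := by
    rcases hconn with h | h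
    · rw [h] at htpos; simp at htpos
    · exact h
  have h0t : none ∈ t := by
    by_contra h0
    have := card_le_one N t h0 htconn
    omega
  have h0R : none ∉ Finset.univ \ t := by simp [h0t]
  have hR1 : (Finset.univ \ t).card ≤ 1 := card_le_one N _ h0R hcR
  exact grundy_B N hN t (by omega) h0t

abbrev GV := SV N ⊕ Fin (N + 1)
abbrev Gr' : SimpleGraph (GV N) := appendPath (Gr N) none (N + 1)

lemma gr'_connected : (Gr' N).Connected := by
  haveI : Nonempty (GV N) := ⟨Sum.inl none⟩
  have path : ∀ n (h : n < N + 1), (Gr' N).Reachable (Sum.inr ⟨n, h⟩) (Sum.inl none) := by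
    intro n
    induction n with
    | zero =>
      intro h
      exact Adj.reachable ((SimpleGraph.fromRel_adj _ _ _).2 ⟨by simp, Or.inr ⟨rfl, rfl⟩⟩)
    | succ m ih =>
      intro h
      have hm : m < N + 1 := by omega
      have adj : (Gr' N).Adj (Sum.inr ⟨m + 1, h⟩) (Sum.inr ⟨m, hm⟩) :=
        (SimpleGraph.fromRel_adj _ _ _).2 ⟨by simp [Fin.ext_iff], Or.inr rfl⟩
      exact adj.reachable.trans (ih hm)
  have key : ∀ v : GV N, (Gr' N).Reachable v (Sum.inl none) := by
    rintro (v | j)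
    · match v with
      | none => exact Reachable.refl _
      | some x =>
        have adj : (Gr' N).Adj (Sum.inl (none : SV N)) (Sum.inl (some x)) :=
          (SimpleGraph.fromRel_adj _ _ _).2 ⟨by simp, Or.inl (star_adj_center N x)⟩
        exact adj.symm.reachable
    · exact path j.1 j.2
  exact ⟨fun x y => (key x).trans (key y).symm⟩

lemma card_GV : Fintype.card (GV N) = 2 * N + 4 := by
  simp [Fintype.card_option]
  omega

lemma grundy_appended_ne (hN : 2 ≤ N) :
    csgGrundy (Gr' N) (LL N) (Finset.univ : Finset (GV N)) ≠ 0 := by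
  haveI : Nonempty (GV N) := ⟨Sum.inl none⟩
  refine csgGrundy_removeAll Finset.univ_nonempty ?_ ?_
  · rw [Finset.card_univ, card_GV]; exact Or.inr rfl
  · rw [Finset.coe_univ]
    exact ((induceUnivIso (Gr' N)).connected_iff).2 (gr'_connected N)

end Star15

/-- For every N ≥ 2 there is M ≢ 0 mod (N+1) such that appending a path of N+1
vertices changes the Grundy value of CSG({1,…,N} ∪ {M}) on some graph: concretely,
M = 2N+4 and G the star with N+2 leaves, with the path appended at its center
(so the disjoint sum of the two games is a first-player win, by Sprague–Grundy). -/
theorem stmt15 (N : ℕ) (hN : 2 ≤ N) :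
    (2 * N + 4) % (N + 1) ≠ 0 ∧
    csgGrundy (subdividedStar fun _ : Fin (N + 2) => 1)
      (Set.Icc 1 N ∪ {2 * N + 4}) Finset.univ ≠
    csgGrundy (appendPath (subdividedStar fun _ : Fin (N + 2) => 1) none (N + 1))
      (Set.Icc 1 N ∪ {2 * N + 4}) Finset.univ := by
  constructor
  · have h2 : (2 * N + 4) % (N + 1) = 2 := by
      conv_lhs => rw [show 2 * N + 4 = 2 + (N + 1) * 2 by ring]
      rw [Nat.add_mul_mod_self_left]
      exact Nat.mod_eq_of_lt (by omega)
    omega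
  · rw [Star15.grundy_star N hN]
    exact fun h => Star15.grundy_appended_ne N hN h.symm
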